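/- A tangent vector v to the Stiefel manifold Isom(ℂᵐ, H) at φ (i.e., v satisfying v*φ + φ*v = 0) lies in the kernel of the differential of π : φ ↦ φφ* (i.e., vφ* + φv* = 0) if and only if range(v) ⊆ range(φ). -/
import Mathlib


/-- A tangent vector `v` to the Stiefel manifold at `φ` (`v*φ + φ*v = 0`) is vertical
for `π : φ ↦ φφ*` (i.e. `vφ* + φv* = 0`) iff `range v ⊆ range φ`. -/
theorem stiefel_vertical_iff_range_le
    {H : Type*} [NormedAddCommGroup H] [InnerProductSpace ℂ H] [FiniteDimensional ℂ H]
    (m : ℕ) (φ v : EuclideanSpace ℂ (Fin m) →ₗ[ℂ] H)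
    (hφ : LinearMap.adjoint φ ∘ₗ φ = LinearMap.id)
    (hv : LinearMap.adjoint v ∘ₗ φ + LinearMap.adjoint φ ∘ₗ v = 0) :
    v ∘ₗ LinearMap.adjoint φ + φ ∘ₗ LinearMap.adjoint v = 0 ↔
      LinearMap.range v ≤ LinearMap.range φ := by
  constructor
  · intro h
    have h2 : (v ∘ₗ LinearMap.adjoint φ + φ ∘ₗ LinearMap.adjoint v) ∘ₗ φ = 0 := by
      rw [h]; exact LinearMap.zero_comp φ
    have h3 : v + φ ∘ₗ (LinearMap.adjoint v ∘ₗ φ) = 0 := by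
      have : (v ∘ₗ LinearMap.adjoint φ) ∘ₗ φ = v := by
        rw [LinearMap.comp_assoc, hφ, LinearMap.comp_id]
      rw [LinearMap.add_comp, this, LinearMap.comp_assoc] at h2
      exact h2
    rintro y ⟨x, rfl⟩
    refine ⟨-((LinearMap.adjoint v ∘ₗ φ) x), ?_⟩
    have h4 := LinearMap.congr_fun h3 x
    simp only [LinearMap.comp_apply, LinearMap.add_apply, LinearMap.zero_apply] at h4
    rw [map_neg]
    simp only [LinearMap.comp_apply]
    exact neg_eq_of_add_eq_zero_left h4
  · intro hr
    have hveq : v = φ ∘ₗ (LinearMap.adjoint φ ∘ₗ v) := by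
      ext x
      obtain ⟨y, hy⟩ := hr (LinearMap.mem_range_self v x)
      have hy2 : (LinearMap.adjoint φ ∘ₗ φ) y = y := by rw [hφ]; rfl
      simp only [LinearMap.comp_apply] at hy2 ⊢
      rw [← hy, hy2]
    have hadj : LinearMap.adjoint v
        = (LinearMap.adjoint v ∘ₗ φ) ∘ₗ LinearMap.adjoint φ := by
      conv_lhs => rw [hveq]
      rw [LinearMap.adjoint_comp, LinearMap.adjoint_comp, LinearMap.adjoint_adjoint,
        LinearMap.comp_assoc]
    have hsum : v ∘ₗ LinearMap.adjoint φ + φ ∘ₗ LinearMap.adjoint v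
        = φ ∘ₗ ((LinearMap.adjoint φ ∘ₗ v + LinearMap.adjoint v ∘ₗ φ)
            ∘ₗ LinearMap.adjoint φ) := by
      conv_lhs => rw [hadj]
      nth_rewrite 1 [hveq]
      simp only [LinearMap.add_comp, LinearMap.comp_add, LinearMap.comp_assoc]
    have hv' : LinearMap.adjoint φ ∘ₗ v + LinearMap.adjoint v ∘ₗ φ = 0 := by
      rw [add_comm]; exact hv
    rw [hsum, hv', LinearMap.zero_comp, LinearMap.comp_zero]
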